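/- Assume the Rankine–Hugoniot condition s = f(u₋)/u₋ and the generalized shock condition (E). Then there exists a smooth solution U : ℝ → ℝ of the profile ODE U′(z) = U(z)^{1−m}·(f(U(z)) − s·U(z)) with 0 < U(z) < u₋, lim_{z→−∞} U(z) = u₋, lim_{z→+∞} U(z) = 0, and U′(z) < 0 for all z ∈ ℝ; moreover this solution is unique up to translation: any two such solutions U₁, U₂ satisfy U₂(z) = U₁(z + z₀) for all z, for some constant z₀ ∈ ℝ. -/

import Mathlib

open MeasureTheory Real Filter Topology Set

noncomputable section

/-- `n`-th partial derivative in the first (space) variable. -/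
def dxn (n : ℕ) (φ : ℝ → ℝ → ℝ) (x t : ℝ) : ℝ := iteratedDeriv n (fun y => φ y t) x

/-- partial derivative in the second (time) variable. -/
def dt1 (φ : ℝ → ℝ → ℝ) (x t : ℝ) : ℝ := deriv (fun τ => φ x τ) t

/-- Japanese bracket `⟨y⟩ = √(1+y²)`. -/
def jb (y : ℝ) : ℝ := Real.sqrt (1 + y ^ 2)

/-- One-sided Japanese bracket `⟨y⟩₊`. -/
def jbp (y : ℝ) : ℝ := if 0 ≤ y then Real.sqrt (1 + y ^ 2) else 1

/-- A viscous shock profile for `u_t + f(u)_x = (u^{m-1} u_x)_x` with speed `s`. -/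
def IsShockProfile (m um s : ℝ) (f U : ℝ → ℝ) : Prop :=
  ContDiff ℝ (⊤ : ℕ∞) U ∧ (∀ z, 0 < U z ∧ U z < um) ∧
  (∀ z, deriv U z = U z ^ (1 - m) * (f (U z) - s * U z)) ∧
  Tendsto U atBot (nhds um) ∧ Tendsto U atTop (nhds 0)

/-- The velocity field of the profile ODE. -/
def gfun (m s : ℝ) (f : ℝ → ℝ) (u : ℝ) : ℝ := u ^ (1 - m) * (f u - s * u)

/-- The "inverse profile" function, defined on `(0, um)` via a separable-ODE integral. -/
def Hfun (m um s : ℝ) (f : ℝ → ℝ) (u : ℝ) : ℝ := ∫ t in (um/2)..u, (gfun m s f t)⁻¹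

section Aux

variable {m um s : ℝ} {f : ℝ → ℝ}

lemma gfun_neg (hE : ∀ u ∈ Set.Ioo (0:ℝ) um, f u - s * u < 0) :
    ∀ u ∈ Set.Ioo (0:ℝ) um, gfun m s f u < 0 := fun u hu =>
  mul_neg_of_pos_of_neg (Real.rpow_pos_of_pos hu.1 _) (hE u hu)

lemma gfun_contDiffOn (hf : ContDiff ℝ (⊤ : ℕ∞) f) :
    ContDiffOn ℝ (⊤ : ℕ∞) (gfun m s f) (Set.Ioi (0:ℝ)) := by
  intro u hu
  exact ((Real.contDiffAt_rpow_const_of_ne (ne_of_gt hu)).mul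
    ((hf.sub (contDiff_const.mul contDiff_id)).contDiffAt)).contDiffWithinAt

lemma gfun_inv_contOn (hf : ContDiff ℝ (⊤ : ℕ∞) f)
    (hE : ∀ u ∈ Set.Ioo (0:ℝ) um, f u - s * u < 0) :
    ContinuousOn (fun t => (gfun m s f t)⁻¹) (Set.Ioo 0 um) := by
  have h1 : ContinuousOn (gfun m s f) (Set.Ioo 0 um) :=
    ((gfun_contDiffOn hf).continuousOn).mono (fun x hx => hx.1)
  exact h1.inv₀ (fun t ht => ne_of_lt (gfun_neg hE t ht))

end Aux

/-- Existence of a monotone viscous shock profile under the Rankine–Hugoniot and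
generalized shock conditions, and its uniqueness up to translation. -/
theorem shock_profile_existence_and_uniqueness
    (m um s : ℝ) (f : ℝ → ℝ)
    (hm1 : 0 < m) (hm2 : m < 1)
    (hf : ContDiff ℝ (⊤ : ℕ∞) f) (hconv : ConvexOn ℝ Set.univ f) (hf0 : f 0 = 0)
    (hum : 0 < um) (hRH : s = f um / um)
    (hE : ∀ u ∈ Set.Ioo (0:ℝ) um, f u - s * u < 0) :
    (∃ U : ℝ → ℝ, IsShockProfile m um s f U ∧ ∀ z, deriv U z < 0) ∧
    (∀ U₁ U₂ : ℝ → ℝ,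
      IsShockProfile m um s f U₁ → (∀ z, deriv U₁ z < 0) →
      IsShockProfile m um s f U₂ → (∀ z, deriv U₂ z < 0) →
      ∃ z₀ : ℝ, ∀ z, U₂ z = U₁ (z + z₀)) := by
  set g : ℝ → ℝ := gfun m s f with hg_def
  set H : ℝ → ℝ := Hfun m um s f with hH_def
  set c : ℝ := um / 2 with hc_def
  have hc : c ∈ Set.Ioo (0:ℝ) um := ⟨half_pos hum, half_lt_self hum⟩
  have hgneg : ∀ u ∈ Set.Ioo (0:ℝ) um, g u < 0 := gfun_neg hE
  have hfum : f um = s * um := by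
    rw [hRH, div_mul_cancel₀]; exact ne_of_gt hum
  have hslope : ∀ x y z : ℝ, x < y → y < z →
      (f y - f x) / (y - x) ≤ (f z - f y) / (z - y) := fun x y z h1 h2 =>
    hconv.slope_mono_adjacent (Set.mem_univ x) (Set.mem_univ z) h1 h2
  have hlow : ∀ u ∈ Set.Ioo (0:ℝ) um, -f (-1) ≤ f u / u := by
    intro u hu
    have h := hslope (-1) 0 u (by norm_num) hu.1
    simp only [hf0, zero_sub, sub_zero, sub_neg_eq_add, zero_add, div_one] at h
    exact h
  have hfc : f c < s * c := by
    have := hE c hc; linarith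
  have hC₀ : (0:ℝ) < s + f (-1) := by
    have h1 := hlow c hc
    have h2 : f c / c < s := (div_lt_iff₀ hc.1).2 hfc
    linarith
  set C₀ : ℝ := s + f (-1) with hC₀_def
  have hlow' : ∀ u ∈ Set.Ioo (0:ℝ) um, s * u - f u ≤ C₀ * u := by
    intro u hu
    have h1 := hlow u hu
    have h2 : -f (-1) * u ≤ f u := (le_div_iff₀ hu.1).1 h1
    rw [hC₀_def]; nlinarith [hu.1]
  set M : ℝ := f (um + 1) - f um with hM_def
  have hMs : s < M := by
    have h1 := hslope c um (um + 1) hc.2 (lt_add_one um)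
    have h2 : um + 1 - um = 1 := by ring
    rw [h2, div_one] at h1
    have h5 : 0 < um - c := by linarith [hc.2]
    have h3 : s * (um - c) < f um - f c := by rw [hfum]; nlinarith
    have h6 : s < (f um - f c) / (um - c) := (lt_div_iff₀ h5).2 h3
    rw [hM_def]; linarith
  set C₁ : ℝ := M - s with hC₁_def
  have hC₁ : (0:ℝ) < C₁ := by rw [hC₁_def]; linarith
  have hup' : ∀ u ∈ Set.Ioo (0:ℝ) um, s * u - f u ≤ C₁ * (um - u) := by
    intro u hu
    have h1 := hslope u um (um + 1) hu.2 (lt_add_one um)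
    have h2 : um + 1 - um = 1 := by ring
    rw [h2, div_one] at h1
    have h5 : 0 < um - u := by linarith [hu.2]
    have h6 : f um - f u ≤ M * (um - u) := by
      have h7 := (div_le_iff₀ h5).1 h1
      rw [← hM_def] at h7
      linarith
    rw [hfum] at h6
    rw [hC₁_def]; nlinarith
  have hgposneg : ∀ t ∈ Set.Ioo (0:ℝ) um, 0 < -g t := fun t ht => by
    have := hgneg t ht; linarith
  have hbound0 : ∀ t ∈ Set.Ioo (0:ℝ) um, (g t)⁻¹ ≤ -(C₀⁻¹ * t ^ (m - 2)) := by
    intro t ht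
    have htpos := ht.1
    have h2m : t ^ ((2:ℝ) - m) = t ^ ((1:ℝ) - m) * t := by
      rw [show (2:ℝ) - m = (1 - m) + 1 by ring, Real.rpow_add htpos, Real.rpow_one]
    have hng : -g t ≤ C₀ * t ^ ((2:ℝ) - m) := by
      have h1 : -g t = t ^ ((1:ℝ) - m) * (s * t - f t) := by
        rw [hg_def]; simp only [gfun]; ring
      rw [h1, h2m]
      have h3 := hlow' t ht
      have h4 : (0:ℝ) ≤ t ^ ((1:ℝ)-m) := (Real.rpow_pos_of_pos htpos _).le
      calc t ^ ((1:ℝ)-m) * (s * t - f t) ≤ t ^ ((1:ℝ)-m) * (C₀ * t) :=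
            mul_le_mul_of_nonneg_left h3 h4
        _ = C₀ * (t ^ ((1:ℝ)-m) * t) := by ring
    have hpos := hgposneg t ht
    have h5 : (C₀ * t ^ ((2:ℝ) - m))⁻¹ ≤ (-g t)⁻¹ := inv_anti₀ hpos hng
    have h6 : (C₀ * t ^ ((2:ℝ) - m))⁻¹ = C₀⁻¹ * t ^ (m - 2) := by
      rw [show m - 2 = -((2:ℝ) - m) by ring, Real.rpow_neg htpos.le, mul_inv]
    rw [h6, inv_neg] at h5
    linarith
  set K : ℝ := um ^ ((1:ℝ) - m) * C₁ with hK_def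
  have hKpos : 0 < K := mul_pos (Real.rpow_pos_of_pos hum _) hC₁
  have hboundum : ∀ t ∈ Set.Ioo (0:ℝ) um, (g t)⁻¹ ≤ -(K⁻¹ * (um - t)⁻¹) := by
    intro t ht
    have htpos := ht.1
    have hng : -g t ≤ K * (um - t) := by
      have h1 : -g t = t ^ ((1:ℝ) - m) * (s * t - f t) := by
        rw [hg_def]; simp only [gfun]; ring
      rw [h1, hK_def]
      have h2 : t ^ ((1:ℝ)-m) ≤ um ^ ((1:ℝ)-m) :=
        Real.rpow_le_rpow htpos.le ht.2.le (by linarith)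
      have h3 := hup' t ht
      have h4 : 0 ≤ s * t - f t := by
        have := hE t ht; linarith
      calc t ^ ((1:ℝ)-m) * (s * t - f t) ≤ um ^ ((1:ℝ)-m) * (C₁ * (um - t)) :=
            mul_le_mul h2 h3 h4 (Real.rpow_pos_of_pos hum _).le
        _ = um ^ ((1:ℝ)-m) * C₁ * (um - t) := by ring
    have hpos := hgposneg t ht
    have h5 : (K * (um - t))⁻¹ ≤ (-g t)⁻¹ := inv_anti₀ hpos hng
    rw [mul_inv, inv_neg] at h5
    linarith
  have hIoo_sub : ∀ {u v : ℝ}, u ∈ Set.Ioo (0:ℝ) um → v ∈ Set.Ioo (0:ℝ) um →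
      Set.uIcc u v ⊆ Set.Ioo (0:ℝ) um := fun hu hv => Set.ordConnected_Ioo.uIcc_subset hu hv
  have hginvC : ContinuousOn (fun t => (g t)⁻¹) (Set.Ioo 0 um) := gfun_inv_contOn hf hE
  have hInt : ∀ u ∈ Set.Ioo (0:ℝ) um, ∀ v ∈ Set.Ioo (0:ℝ) um,
      IntervalIntegrable (fun t => (g t)⁻¹) volume u v := fun u hu v hv =>
    (hginvC.mono (hIoo_sub hu hv)).intervalIntegrable
  have hHasDeriv : ∀ u ∈ Set.Ioo (0:ℝ) um, HasDerivAt H ((g u)⁻¹) u := by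
    intro u hu
    exact intervalIntegral.integral_hasDerivAt_right (hInt c hc u hu)
      (ContinuousOn.stronglyMeasurableAtFilter isOpen_Ioo hginvC u hu)
      (hginvC.continuousAt (Ioo_mem_nhds hu.1 hu.2))
  have hHcont : ContinuousOn H (Set.Ioo 0 um) := fun u hu =>
    (hHasDeriv u hu).continuousAt.continuousWithinAt
  have hHanti : StrictAntiOn H (Set.Ioo 0 um) := by
    apply strictAntiOn_of_deriv_neg (convex_Ioo _ _) hHcont
    intro u hu
    rw [interior_Ioo] at hu
    rw [(hHasDeriv u hu).deriv]
    exact inv_lt_zero.2 (hgneg u hu)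
  have hm1' : (0:ℝ) < 1 - m := by linarith
  -- divergence of H at 0⁺
  have hrpow_tendsto : Tendsto (fun u : ℝ => u ^ (m - 1)) (𝓝[>] (0:ℝ)) atTop := by
    have h1 : Tendsto (fun u : ℝ => (u⁻¹) ^ ((1:ℝ) - m)) (𝓝[>] (0:ℝ)) atTop :=
      (tendsto_rpow_atTop hm1').comp tendsto_inv_nhdsGT_zero
    apply h1.congr'
    filter_upwards [self_mem_nhdsWithin] with u hu
    rw [Real.inv_rpow (le_of_lt hu), ← Real.rpow_neg (le_of_lt hu),
      show -((1:ℝ)-m) = m - 1 by ring]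
  set k : ℝ := C₀⁻¹ / (1 - m) with hk_def
  have hk : 0 < k := div_pos (inv_pos.2 hC₀) hm1'
  have hHlower : ∀ u ∈ Set.Ioo (0:ℝ) c, k * u ^ (m-1) - k * c ^ (m-1) ≤ H u := by
    intro u hu
    have hu' : u ∈ Set.Ioo (0:ℝ) um := ⟨hu.1, hu.2.trans hc.2⟩
    have huc : u < c := hu.2
    have hrint : IntervalIntegrable (fun t : ℝ => -(C₀⁻¹ * t ^ (m-2))) volume u c := by
      apply ContinuousOn.intervalIntegrable
      intro t ht
      rw [Set.uIcc_of_le huc.le] at ht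
      have ht0 : t ≠ 0 := ne_of_gt (lt_of_lt_of_le hu.1 ht.1)
      exact ((continuousAt_const.mul
        (Real.continuousAt_rpow_const t _ (Or.inl ht0))).neg).continuousWithinAt
    have hmono : (∫ t in u..c, (g t)⁻¹) ≤ ∫ t in u..c, -(C₀⁻¹ * t ^ (m-2)) := by
      apply intervalIntegral.integral_mono_on huc.le (hInt u hu' c hc) hrint
      intro t ht
      exact hbound0 t ⟨lt_of_lt_of_le hu.1 ht.1, lt_of_le_of_lt ht.2 hc.2⟩
    have hval : (∫ t in u..c, -(C₀⁻¹ * t ^ (m-2)))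
        = -(C₀⁻¹ * ((c ^ (m-1) - u ^ (m-1))/(m-1))) := by
      rw [intervalIntegral.integral_neg, intervalIntegral.integral_const_mul,
        integral_rpow (Or.inr ⟨(by intro h; linarith : m - 2 ≠ -1),
          Set.notMem_uIcc_of_lt hu.1 hc.1⟩)]
      rw [show m - 2 + 1 = m - 1 by ring]
    have hHu : H u = -∫ t in u..c, (g t)⁻¹ := by
      rw [hH_def]; simp only [Hfun]
      rw [← hc_def, ← hg_def]
      exact intervalIntegral.integral_symm u c
    rw [hHu]
    have h7 : -(∫ t in u..c, -(C₀⁻¹ * t ^ (m-2))) ≤ -∫ t in u..c, (g t)⁻¹ := by linarith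
    have h8 : -(∫ t in u..c, -(C₀⁻¹ * t ^ (m-2))) = k * u ^ (m-1) - k * c ^ (m-1) := by
      rw [hval, hk_def]
      have hm1ne : m - 1 ≠ 0 := by intro h; exact hm2.ne (by linarith)
      field_simp
      ring
    rw [h8] at h7
    exact h7
  have hHtop : Tendsto H (𝓝[>] (0:ℝ)) atTop := by
    apply tendsto_atTop_mono' (𝓝[>] (0:ℝ))
      (f₁ := fun u => k * u ^ (m-1) - k * c ^ (m-1))
    · filter_upwards [Ioo_mem_nhdsGT_of_mem (Set.mem_Ico.2 ⟨le_refl (0:ℝ), hc.1⟩)] with u hu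
      exact hHlower u hu
    · have := (hrpow_tendsto.const_mul_atTop hk)
      simpa [sub_eq_add_neg] using tendsto_atTop_add_const_right _ (-(k * c ^ (m-1))) this
  -- divergence of H at um⁻
  have hlog_tendsto : Tendsto (fun u : ℝ => Real.log (um - u)) (𝓝[<] um) atBot := by
    apply Real.tendsto_log_nhdsGT_zero.comp
    apply tendsto_nhdsWithin_of_tendsto_nhds_of_eventually_within
    · have h1 : Tendsto (fun u : ℝ => um - u) (𝓝 um) (𝓝 (um - um)) :=
        (continuous_const.sub continuous_id).tendsto um
      rw [sub_self] at h1
      exact h1.mono_left nhdsWithin_le_nhds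
    · filter_upwards [self_mem_nhdsWithin] with u hu
      have hu' : u < um := hu
      exact Set.mem_Ioi.2 (sub_pos.2 hu')
  have hHupper : ∀ u ∈ Set.Ioo c um,
      H u ≤ K⁻¹ * Real.log (um - u) - K⁻¹ * Real.log (um - c) := by
    intro u hu
    have hu' : u ∈ Set.Ioo (0:ℝ) um := ⟨lt_trans hc.1 hu.1, hu.2⟩
    have hcu : c < u := hu.1
    have hint2 : IntervalIntegrable (fun t : ℝ => (um - t)⁻¹) volume c u := by
      apply ContinuousOn.intervalIntegrable
      apply ContinuousOn.inv₀ ((continuous_const.sub continuous_id).continuousOn)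
      intro t ht
      rw [Set.uIcc_of_le hcu.le] at ht
      exact ne_of_gt (sub_pos.2 (lt_of_le_of_lt ht.2 hu.2))
    have hFTC : (∫ t in c..u, (um - t)⁻¹)
        = -Real.log (um - u) - -Real.log (um - c) := by
      apply intervalIntegral.integral_eq_sub_of_hasDerivAt (f' := fun t : ℝ => (um - t)⁻¹)
        (f := fun t : ℝ => -Real.log (um - t)) ?_ hint2
      intro t ht
      rw [Set.uIcc_of_le hcu.le] at ht
      have htum : t < um := lt_of_le_of_lt ht.2 hu.2
      have h1 : HasDerivAt (fun t : ℝ => um - t) (-1) t := (hasDerivAt_id t).const_sub um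
      have h2 : HasDerivAt (fun t : ℝ => Real.log (um - t)) ((um - t)⁻¹ * (-1)) t :=
        (Real.hasDerivAt_log (ne_of_gt (sub_pos.2 htum))).comp t h1
      have h3 : HasDerivAt (fun t : ℝ => -Real.log (um - t)) (-((um - t)⁻¹ * (-1))) t := h2.neg
      exact h3.congr_deriv (by ring)
    have hint3 : IntervalIntegrable (fun t : ℝ => -(K⁻¹ * (um - t)⁻¹)) volume c u :=
      ((hint2.const_mul K⁻¹).neg)
    have hmono : (∫ t in c..u, (g t)⁻¹) ≤ ∫ t in c..u, -(K⁻¹ * (um - t)⁻¹) := by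
      apply intervalIntegral.integral_mono_on hcu.le (hInt c hc u hu') hint3
      intro t ht
      exact hboundum t ⟨lt_of_lt_of_le hc.1 ht.1, lt_of_le_of_lt ht.2 hu.2⟩
    have hHu : H u = ∫ t in c..u, (g t)⁻¹ := rfl
    have hval : (∫ t in c..u, -(K⁻¹ * (um - t)⁻¹))
        = K⁻¹ * Real.log (um - u) - K⁻¹ * Real.log (um - c) := by
      rw [intervalIntegral.integral_neg, intervalIntegral.integral_const_mul, hFTC]
      ring
    rw [hval] at hmono
    rw [hHu]
    exact hmono
  have hHbot : Tendsto H (𝓝[<] um) atBot := by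
    apply tendsto_atBot_mono' (𝓝[<] um)
      (f₁ := fun u => K⁻¹ * Real.log (um - u) - K⁻¹ * Real.log (um - c))
    · filter_upwards [Ioo_mem_nhdsLT_of_mem (Set.mem_Ioc.2 ⟨hc.2, le_refl um⟩)] with u hu
      exact hHupper u hu
    · have := hlog_tendsto.const_mul_atBot (inv_pos.2 hKpos)
      simpa [sub_eq_add_neg] using
        tendsto_atBot_add_const_right _ (-(K⁻¹ * Real.log (um - c))) this
  -- surjectivity of H onto ℝ
  have hIooIoi : Set.Ioo (0:ℝ) um ∈ 𝓝[>] (0:ℝ) :=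
    Ioo_mem_nhdsGT_of_mem (Set.mem_Ico.2 ⟨le_refl (0:ℝ), hum⟩)
  have hIooIio : Set.Ioo (0:ℝ) um ∈ 𝓝[<] um :=
    Ioo_mem_nhdsLT_of_mem (Set.mem_Ioc.2 ⟨hum, le_refl um⟩)
  have hsurj : ∀ z : ℝ, ∃ u ∈ Set.Ioo (0:ℝ) um, H u = z := by
    intro z
    obtain ⟨a, haz, ha⟩ := ((hHtop.eventually_ge_atTop z).and (eventually_mem_set.2 hIooIoi)).exists
    obtain ⟨b, hbz, hb⟩ := ((hHbot.eventually_le_atBot z).and (eventually_mem_set.2 hIooIio)).exists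
    have hsub := hIoo_sub ha hb
    have hcon : ContinuousOn H (Set.uIcc a b) := hHcont.mono hsub
    have hz : z ∈ Set.uIcc (H a) (H b) := Set.mem_uIcc.2 (Or.inr ⟨hbz, haz⟩)
    obtain ⟨u, hu, hHu⟩ := intermediate_value_uIcc hcon hz
    exact ⟨u, hsub hu, hHu⟩
  choose U hUmem hHU using hsurj
  have hcmp1 : ∀ u ∈ Set.Ioo (0:ℝ) um, ∀ z : ℝ, H u < z ↔ U z < u := by
    intro u hu z
    constructor
    · intro hlt
      by_contra hle
      push_neg at hle
      rcases eq_or_lt_of_le hle with he | hl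
      · rw [he, hHU z] at hlt; exact lt_irrefl _ hlt
      · have h := hHanti hu (hUmem z) hl
        rw [hHU] at h; linarith
    · intro h
      have h2 := hHanti (hUmem z) hu h
      rwa [hHU] at h2
  have hcmp2 : ∀ u ∈ Set.Ioo (0:ℝ) um, ∀ z : ℝ, z < H u ↔ u < U z := by
    intro u hu z
    constructor
    · intro hlt
      by_contra hle
      push_neg at hle
      rcases eq_or_lt_of_le hle with he | hl
      · rw [← he, hHU z] at hlt; exact lt_irrefl _ hlt
      · have h := hHanti (hUmem z) hu hl
        rw [hHU] at h; linarith
    · intro h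
      have h2 := hHanti hu (hUmem z) h
      rwa [hHU] at h2
  have hUcont : Continuous U := by
    rw [continuous_iff_continuousAt]
    intro a
    rw [Metric.continuousAt_iff]
    intro ε hε
    have hUa := hUmem a
    set p : ℝ := max (U a - ε) (U a / 2) with hp_def
    set q : ℝ := min (U a + ε) ((U a + um)/2) with hq_def
    have hpa : p < U a := max_lt (by linarith) (by linarith [hUa.1])
    have haq : U a < q := lt_min (by linarith) (by linarith [hUa.2])
    have hp_mem : p ∈ Set.Ioo (0:ℝ) um :=
      ⟨lt_max_of_lt_right (by linarith [hUa.1]), lt_trans hpa hUa.2⟩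
    have hq_mem : q ∈ Set.Ioo (0:ℝ) um :=
      ⟨lt_trans hUa.1 haq, min_lt_of_right_lt (by linarith [hUa.2])⟩
    have hHp : a < H p := by
      have h := hHanti hp_mem (hUmem a) hpa; rwa [hHU] at h
    have hHq : H q < a := by
      have h := hHanti (hUmem a) hq_mem haq; rwa [hHU] at h
    refine ⟨min (H p - a) (a - H q), lt_min (by linarith) (by linarith), ?_⟩
    intro x hx
    rw [Real.dist_eq] at hx ⊢
    have hx' := abs_lt.1 hx
    have hx1 : x < H p := by
      have := lt_of_lt_of_le hx'.2 (min_le_left _ _); linarith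
    have hx2 : H q < x := by
      have h3 : -(a - H q) ≤ -(min (H p - a) (a - H q)) := neg_le_neg (min_le_right _ _)
      linarith [hx'.1]
    have hUx1 : p < U x := (hcmp2 p hp_mem x).1 hx1
    have hUx2 : U x < q := (hcmp1 q hq_mem x).1 hx2
    have hple : U a - ε ≤ p := le_max_left _ _
    have hqle : q ≤ U a + ε := min_le_left _ _
    rw [abs_lt]
    constructor <;> linarith
  have hUderiv : ∀ z, HasDerivAt U (g (U z)) z := by
    intro z
    have h1 := HasDerivAt.of_local_left_inverse hUcont.continuousAt
      (hHasDeriv (U z) (hUmem z))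
      (inv_ne_zero (ne_of_lt (hgneg (U z) (hUmem z))))
      (Filter.Eventually.of_forall hHU)
    rwa [inv_inv] at h1
  have hUderiv' : ∀ z, deriv U z = g (U z) := fun z => (hUderiv z).deriv
  have hUsmooth : ContDiff ℝ (⊤ : ℕ∞) U := by
    apply contDiff_infty.2
    intro n
    induction n with
    | zero => exact contDiff_zero.2 hUcont
    | succ n ih =>
      rw [show ((n+1 : ℕ) : WithTop ℕ∞) = (n : WithTop ℕ∞) + 1 by push_cast; ring]
      apply contDiff_succ_iff_deriv.2
      refine ⟨fun z => (hUderiv z).differentiableAt, by simp, ?_⟩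
      have hd : deriv U = fun z => g (U z) := funext hUderiv'
      rw [hd]
      have hgn : ContDiffOn ℝ (n : WithTop ℕ∞) g (Set.Ioi 0) :=
        (gfun_contDiffOn hf).of_le (by exact_mod_cast le_top)
      exact contDiffOn_univ.1 (hgn.comp ih.contDiffOn (fun x _ => (hUmem x).1))
  have hUtop : Tendsto U atTop (𝓝 0) := by
    apply tendsto_order.2
    constructor
    · intro a ha
      exact Filter.Eventually.of_forall (fun z => lt_trans ha (hUmem z).1)
    · intro a ha
      set u' : ℝ := min (a/2) c with hu'_def
      have hu'm : u' ∈ Set.Ioo (0:ℝ) um :=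
        ⟨lt_min (by linarith) hc.1, lt_of_le_of_lt (min_le_right _ _) hc.2⟩
      filter_upwards [eventually_gt_atTop (H u')] with z hz
      have h1 := (hcmp1 u' hu'm z).1 hz
      have h2 : u' ≤ a/2 := min_le_left _ _
      linarith
  have hUbot : Tendsto U atBot (𝓝 um) := by
    apply tendsto_order.2
    constructor
    · intro a ha
      rcases le_or_gt a 0 with h0 | h0
      · exact Filter.Eventually.of_forall (fun z => lt_of_le_of_lt h0 (hUmem z).1)
      · have ham : a ∈ Set.Ioo (0:ℝ) um := ⟨h0, ha⟩
        filter_upwards [eventually_lt_atBot (H a)] with z hz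
        exact (hcmp2 a ham z).1 hz
    · intro a ha
      exact Filter.Eventually.of_forall (fun z => lt_trans (hUmem z).2 ha)
  constructor
  · refine ⟨U, ⟨hUsmooth, fun z => ⟨(hUmem z).1, (hUmem z).2⟩, ?_, hUbot, hUtop⟩, ?_⟩
    · intro z
      rw [hUderiv' z, hg_def]
      rfl
    · intro z
      rw [hUderiv' z]
      exact hgneg _ (hUmem z)
  · rintro U₁ U₂ ⟨hs1, hmem1, hode1, -, -⟩ - ⟨hs2, hmem2, hode2, -, -⟩ -
    have key : ∀ (V : ℝ → ℝ), ContDiff ℝ (⊤:ℕ∞) V → (∀ z, 0 < V z ∧ V z < um) →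
        (∀ z, deriv V z = V z ^ (1-m) * (f (V z) - s * V z)) →
        ∀ z, H (V z) = z + H (V 0) := by
      intro V hVs hVm hVode z
      have hVmem : ∀ x, V x ∈ Set.Ioo (0:ℝ) um := fun x => ⟨(hVm x).1, (hVm x).2⟩
      have hVd : ∀ x, HasDerivAt V (g (V x)) x := by
        intro x
        have h1 : DifferentiableAt ℝ V x :=
          (hVs.differentiable (by simp)).differentiableAt
        have h2 := h1.hasDerivAt
        rw [hVode x] at h2
        exact h2
      have hφd : ∀ x, HasDerivAt (fun y => H (V y) - y) 0 x := by
        intro x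
        have h1 := ((hHasDeriv (V x) (hVmem x)).comp x (hVd x)).sub (hasDerivAt_id x)
        rw [inv_mul_cancel₀ (ne_of_lt (hgneg (V x) (hVmem x))), sub_self] at h1
        exact h1
      have hconst := is_const_of_deriv_eq_zero (f := fun y => H (V y) - y)
        (fun y => (hφd y).differentiableAt) (fun y => (hφd y).deriv) z 0
      linarith [hconst]
    refine ⟨H (U₂ 0) - H (U₁ 0), fun z => ?_⟩
    have h2 := key U₂ hs2 hmem2 hode2 z
    have h1 := key U₁ hs1 hmem1 hode1 (z + (H (U₂ 0) - H (U₁ 0)))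
    apply hHanti.injOn ⟨(hmem2 z).1, (hmem2 z).2⟩ ⟨(hmem1 _).1, (hmem1 _).2⟩
    rw [h2, h1]
    ring
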